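/- arXiv:1803.03833 — 4 statements merged into one kernel-verified Lean document; each statement's English description precedes it below -/
import Mathlib

section
/- Let F : 2^{[N]} → ℝ be a submodular function with F([N]) = 0 and let f be its Lovász extension. For x, x′ ∈ ℝ^N, write x ⇀ x′ if for all u, v ∈ [N], x_u > x_v implies x′_u > x′_v. If x ⇀ x′, then ∇f(x′) ⊆ ∇f(x), and ⟨y, x⟩ = f(x) for every y ∈ ∇f(x′). -/
/-!
On the cone of vectors sorted by a fixed permutation `σ`, the Lovász extension agrees with a
linear functional (the sorted-sum formula). If `x ⇀ x'`, the permutation sorting `x'` also sorts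
`x`, and for large `s` it sorts `s • x' - x` as well: `x` lies in the face of the cone spanned by
`x'`. A subgradient `y` at `x'` satisfies `⟨y, x'⟩ = f(x')` (test `0` and `2x'`), hence
`⟨y, z⟩ ≤ f(z)` for all `z`; testing `s • x' - x` and using linearity on the cone gives
`⟨y, x⟩ ≥ f(x)`. So `⟨y, x⟩ = f(x)`, and then `y` is a subgradient at `x` too.
-/

open scoped BigOperators
open Finset

noncomputable section

/-- A set function on the ground set `Fin N` is submodular:
`F(S ∪ T) + F(S ∩ T) ≤ F(S) + F(T)` for all `S, T`. -/
def Submodular {N : ℕ} (F : Finset (Fin N) → ℝ) : Prop :=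
  ∀ S T : Finset (Fin N), F (S ∪ T) + F (S ∩ T) ≤ F S + F T

/-- The Lovász extension of a set function, written in its (tie-breaking independent)
level-set integral form, which agrees with the usual sorted-sum definition
`f(x) = Σ_{j=1}^{N-1} F({i_1,…,i_j})(x_{i_j} − x_{i_{j+1}})` for a nonincreasing
ordering `x_{i_1} ≥ … ≥ x_{i_N}`. -/
def lovasz {N : ℕ} (F : Finset (Fin N) → ℝ) (x : Fin N → ℝ) : ℝ :=
  ∫ t in (⨅ v, x v)..(⨆ v, x v), F (Finset.univ.filter fun v => t < x v)

/-- The inner product `⟨y, x⟩ = Σ_v y_v x_v`. -/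
def dotp {N : ℕ} (y x : Fin N → ℝ) : ℝ := ∑ v, y v * x v

/-- The set of subgradients of `f : ℝ^N → ℝ` at `x`. -/
def subgradients {N : ℕ} (f : (Fin N → ℝ) → ℝ) (x : Fin N → ℝ) : Set (Fin N → ℝ) :=
  {y | ∀ x', dotp y (x' - x) ≤ f x' - f x}

/-- The base polytope of a set function: `y(S) ≤ F(S)` for all `S ⊆ V` and `y(V) = 0`. -/
def basePolytope {N : ℕ} (F : Finset (Fin N) → ℝ) : Set (Fin N → ℝ) :=
  {y | (∀ S : Finset (Fin N), ∑ v ∈ S, y v ≤ F S) ∧ ∑ v, y v = 0}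

/-- The sign function (`sgn 0 = 0`). -/
def sgn (a : ℝ) : ℝ := if 0 < a then 1 else if a < 0 then -1 else 0

/-- A vector is nonconstant. -/
def Nonconstant {N : ℕ} (x : Fin N → ℝ) : Prop := ∃ u v, x u ≠ x v

/-- Restriction of a vector to a subset of vertices (zero outside that subset). -/
def restrictVec {N : ℕ} (x : Fin N → ℝ) (C : Finset (Fin N)) : Fin N → ℝ :=
  fun v => if v ∈ C then x v else 0

/-- Euclidean norm on `ℝ^N`. -/
def l2norm {N : ℕ} (z : Fin N → ℝ) : ℝ := Real.sqrt (∑ v, z v ^ 2)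

/-- Supremum norm on `ℝ^N`. -/
def linfNorm {N : ℕ} (z : Fin N → ℝ) : ℝ := ⨆ v, |z v|

/-- A submodular hypergraph `G = (V, E, w, μ)` on `V = Fin N`: hyperedges `E`,
positive vertex weights `μ`, and for each hyperedge `e ∈ E` a scalar `θ_e > 0`
together with a normalized symmetric submodular weight `w_e : 2^e → [0,1]`
(extended to all of `2^V` by `w_e(S) = w_e(S ∩ e)`). -/
structure SubmodularHypergraph (N : ℕ) where
  E : Finset (Finset (Fin N))
  μ : Fin N → ℝ
  μ_pos : ∀ v, 0 < μ v
  θ : Finset (Fin N) → ℝ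
  θ_pos : ∀ e ∈ E, 0 < θ e
  w : Finset (Fin N) → Finset (Fin N) → ℝ
  w_inter : ∀ e ∈ E, ∀ S, w e S = w e (S ∩ e)
  w_submodular : ∀ e ∈ E, Submodular (w e)
  w_nonneg : ∀ e ∈ E, ∀ S, 0 ≤ w e S
  w_le_one : ∀ e ∈ E, ∀ S, w e S ≤ 1
  w_empty : ∀ e ∈ E, w e ∅ = 0
  w_normalized : ∀ e ∈ E, ∃ S ⊆ e, w e S = 1
  w_symm : ∀ e ∈ E, ∀ S ⊆ e, w e S = w e (e \ S)

namespace SubmodularHypergraph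

variable {N : ℕ} (G : SubmodularHypergraph N)

/-- `vol(S) = Σ_{v ∈ S} μ_v`. -/
def vol (S : Finset (Fin N)) : ℝ := ∑ v ∈ S, G.μ v

/-- `vol(∂S) = Σ_{e ∈ E} θ_e w_e(S)`. -/
def volB (S : Finset (Fin N)) : ℝ := ∑ e ∈ G.E, G.θ e * G.w e S

/-- The Lovász extension `f_e` of the hyperedge weight `w_e`. -/
def fe (e : Finset (Fin N)) (x : Fin N → ℝ) : ℝ := lovasz (G.w e) x

/-- `Q_p(x) = Σ_{e ∈ E} θ_e f_e(x)^p`. -/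
def Q (p : ℝ) (x : Fin N → ℝ) : ℝ := ∑ e ∈ G.E, G.θ e * G.fe e x ^ p

/-- `‖x‖_{ℓp,μ}^p = Σ_v μ_v |x_v|^p`. -/
def normLpPow (p : ℝ) (x : Fin N → ℝ) : ℝ := ∑ v, G.μ v * |x v| ^ p

/-- `G` is connected: `vol(∂S) > 0` for all nonempty proper `S ⊂ V`. -/
def Connected : Prop :=
  ∀ S : Finset (Fin N), S.Nonempty → S ≠ Finset.univ → 0 < G.volB S

/-- Vertices `u, v` are connected in `G`: every `S` with `u ∈ S`, `v ∉ S` has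
`vol(∂S) > 0`. -/
def VertConnected (u v : Fin N) : Prop :=
  ∀ S : Finset (Fin N), u ∈ S → v ∉ S → 0 < G.volB S

/-- The conductance `c(S) = vol(∂S) / min{vol(S), vol(V∖S)}`. -/
def conductance (S : Finset (Fin N)) : ℝ := G.volB S / min (G.vol S) (G.vol Sᶜ)

/-- The degree `d_v = Σ_{e ∈ E : v ∈ e} θ_e`. -/
def degree (v : Fin N) : ℝ := ∑ e ∈ G.E.filter (fun e => v ∈ e), G.θ e

/-- `τ = max_v d_v / μ_v`. -/
def tau : ℝ := ⨆ v, G.degree v / G.μ v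

/-- `G` is homogeneous: `w_e(S) = 1` for every `S ∈ 2^e ∖ {∅, e}`. -/
def Homogeneous : Prop :=
  ∀ e ∈ G.E, ∀ S ⊆ e, S ≠ ∅ → S ≠ e → G.w e S = 1

/-- `(λ, x)` is an eigenpair of the `p`-Laplacian `△_p` (for `p > 1` and for `p = 1`). -/
def IsEigenpair (p lam : ℝ) (x : Fin N → ℝ) : Prop :=
  x ≠ 0 ∧
  ∃ y : Finset (Fin N) → Fin N → ℝ,
    (∀ e ∈ G.E, y e ∈ basePolytope (G.w e) ∧
        ∀ z ∈ basePolytope (G.w e), dotp z x ≤ dotp (y e) x) ∧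
    (if 1 < p then
        ∀ v, ∑ e ∈ G.E, G.θ e * G.fe e x ^ (p - 1) * y e v
              = lam * G.μ v * (|x v| ^ (p - 1) * sgn (x v))
      else
        (∀ v, x v ≠ 0 → ∑ e ∈ G.E, G.θ e * y e v = lam * G.μ v * sgn (x v)) ∧
        (∀ v, x v = 0 → |∑ e ∈ G.E, G.θ e * y e v| ≤ lam * G.μ v))

/-- Vertices `u, v` are connected inside the induced sub-hypergraph `G[W]`
(the boundary volume in `G[W]` of `S ⊆ W` equals `Σ_{e ∈ E} θ_e w_e(S)`). -/
def VertConnectedIn (W : Finset (Fin N)) (u v : Fin N) : Prop :=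
  u = v ∨ ∀ S ⊆ W, u ∈ S → v ∉ S → 0 < G.volB S

/-- `C` is (the vertex set of) a connected component of the induced sub-hypergraph `G[W]`. -/
def IsComponent (W C : Finset (Fin N)) : Prop :=
  C ⊆ W ∧ C.Nonempty ∧
    (∀ u ∈ C, ∀ v ∈ C, G.VertConnectedIn W u v) ∧
    (∀ u ∈ C, ∀ v ∈ W, G.VertConnectedIn W u v → v ∈ C)

end SubmodularHypergraph

def posSupp {N : ℕ} (x : Fin N → ℝ) : Finset (Fin N) := Finset.univ.filter fun v => 0 < x v
def negSupp {N : ℕ} (x : Fin N → ℝ) : Finset (Fin N) := Finset.univ.filter fun v => x v < 0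
def nonnegSupp {N : ℕ} (x : Fin N → ℝ) : Finset (Fin N) := Finset.univ.filter fun v => 0 ≤ x v
def nonposSupp {N : ℕ} (x : Fin N → ℝ) : Finset (Fin N) := Finset.univ.filter fun v => x v ≤ 0

namespace SubmodularHypergraph

variable {N : ℕ} (G : SubmodularHypergraph N)

/-- The number of strong nodal domains of `x` (positive ones plus negative ones). -/
def strongNodalCount (x : Fin N → ℝ) : ℕ :=
  {C : Finset (Fin N) | G.IsComponent (posSupp x) C}.ncard +
  {C : Finset (Fin N) | G.IsComponent (negSupp x) C}.ncard

/-- The number of weak nodal domains of `x` (positive ones plus negative ones). -/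
def weakNodalCount (x : Fin N → ℝ) : ℕ :=
  {C : Finset (Fin N) | G.IsComponent (nonnegSupp x) C}.ncard +
  {C : Finset (Fin N) | G.IsComponent (nonposSupp x) C}.ncard

/-- The collection of strong nodal domains of `x`. -/
def strongNodalDomains (x : Fin N → ℝ) : Set (Finset (Fin N)) :=
  {C | G.IsComponent (posSupp x) C ∨ G.IsComponent (negSupp x) C}

/-- The collection of weak nodal domains of `x`. -/
def weakNodalDomains (x : Fin N → ℝ) : Set (Finset (Fin N)) :=
  {C | G.IsComponent (nonnegSupp x) C ∨ G.IsComponent (nonposSupp x) C}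

/-- `Z_{p,μ}(x) = min_c ‖x − c·𝟙‖_{ℓp,μ}^p`. -/
def Z (p : ℝ) (x : Fin N → ℝ) : ℝ := ⨅ c : ℝ, ∑ v, G.μ v * |x v - c| ^ p

/-- `𝓡_p(x) = Q_p(x) / Z_{p,μ}(x)`. -/
def Rq (p : ℝ) (x : Fin N → ℝ) : ℝ := G.Q p x / G.Z p x

/-- The `k`-way Cheeger constant `h_k`. -/
def cheegerConst (k : ℕ) : ℝ :=
  sInf {c : ℝ | ∃ S : Fin k → Finset (Fin N),
    (∀ i, (S i).Nonempty) ∧ (∀ i j, i ≠ j → Disjoint (S i) (S j)) ∧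
    c = ⨆ i, G.conductance (S i)}

end SubmodularHypergraph

/-- There is an odd continuous map `h : A → ℝ^k ∖ {0}`. -/
def genusLE {N : ℕ} (A : Set (Fin N → ℝ)) (k : ℕ) : Prop :=
  ∃ h : (Fin N → ℝ) → (Fin k → ℝ),
    ContinuousOn h A ∧ (∀ x ∈ A, h (-x) = -h x) ∧ ∀ x ∈ A, h x ≠ 0

/-- The Krasnoselski genus of a set. -/
def genus {N : ℕ} (A : Set (Fin N → ℝ)) : ℕ∞ :=
  sInf ((fun n : ℕ => (n : ℕ∞)) '' {n | genusLE A n})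

namespace SubmodularHypergraph

variable {N : ℕ} (G : SubmodularHypergraph N)

/-- The `k`-th variational eigenvalue `λ_k^{(p)}` of `△_p`:
`min` over closed symmetric `A ⊆ S_{p,μ}` with `γ(A) ≥ k` of `max_{x ∈ A} Q_p(x)`. -/
def varEigen (p : ℝ) (k : ℕ) : ℝ :=
  sInf ((fun A : Set (Fin N → ℝ) => sSup (G.Q p '' A)) ''
    {A | IsClosed A ∧ (∀ x ∈ A, -x ∈ A) ∧
         A ⊆ {x | G.normLpPow p x = 1} ∧ (k : ℕ∞) ≤ genus A})

end SubmodularHypergraph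

section Dominance

variable {ι : Type*} {x x' : ι → ℝ}

lemma le_of_dominates (hdom : ∀ u v, x v < x u → x' v < x' u) {u v : ι}
    (h : x' u ≤ x' v) : x u ≤ x v :=
  not_lt.1 fun hlt => (hdom u v hlt).not_ge h

lemma exists_smul_sub_le_of_dominates [Finite ι] (hdom : ∀ u v, x v < x u → x' v < x' u) :
    ∃ s : ℝ, ∀ u v, x' u ≤ x' v → (s • x' - x) u ≤ (s • x' - x) v := by
  obtain ⟨s, hs⟩ := Finite.bddAbove_range fun p : ι × ι => (x p.2 - x p.1) / (x' p.2 - x' p.1)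
  refine ⟨s, fun u v h => ?_⟩
  simp only [Pi.sub_apply, Pi.smul_apply, smul_eq_mul]
  rcases h.lt_or_eq with hlt | heq
  · have hratio : (x v - x u) / (x' v - x' u) ≤ s := hs ⟨(u, v), rfl⟩
    rw [div_le_iff₀ (sub_pos.2 hlt)] at hratio
    linarith
  · have : x u = x v := le_antisymm (le_of_dominates hdom heq.le) (le_of_dominates hdom heq.ge)
    rw [heq, this]

end Dominance

lemma dotp_sub {N : ℕ} (y z w : Fin N → ℝ) : dotp y (z - w) = dotp y z - dotp y w := by
  simp only [dotp, Pi.sub_apply, mul_sub, Finset.sum_sub_distrib]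

lemma dotp_add {N : ℕ} (y z w : Fin N → ℝ) : dotp y (z + w) = dotp y z + dotp y w := by
  simp only [dotp, Pi.add_apply, mul_add, Finset.sum_add_distrib]

lemma dotp_smul {N : ℕ} (y z : Fin N → ℝ) (s : ℝ) : dotp y (s • z) = s * dotp y z := by
  simp only [dotp, Pi.smul_apply, smul_eq_mul, Finset.mul_sum]
  exact Finset.sum_congr rfl fun _ _ => by ring

section LinearOnCone

variable {N : ℕ} {f : (Fin N → ℝ) → ℝ} {L : (Fin N → ℝ) →ₗ[ℝ] ℝ}
  {K : PointedCone ℝ (Fin N → ℝ)} {x x' y : Fin N → ℝ}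

lemma dotp_eq_of_mem_subgradients_of_eqOn (hfL : Set.EqOn f L K) (hx' : x' ∈ K)
    (hy : y ∈ subgradients f x') : dotp y x' = f x' := by
  have h0 := hy 0
  have h2 := hy (x' + x')
  rw [dotp_sub, hfL K.zero_mem, map_zero] at h0
  rw [dotp_sub, dotp_add, hfL (K.add_mem hx' hx'), map_add, ← hfL hx'] at h2
  have hy0 : dotp y 0 = 0 := by simp [dotp]
  linarith

lemma dotp_le_of_mem_subgradients (hy : y ∈ subgradients f x') (hyx' : dotp y x' = f x')
    (z : Fin N → ℝ) : dotp y z ≤ f z := by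
  have := hy z
  rw [dotp_sub] at this
  linarith

lemma dotp_eq_of_mem_subgradients_of_smul_sub_mem (hfL : Set.EqOn f L K) (hx' : x' ∈ K)
    (hy : y ∈ subgradients f x') {s : ℝ} (hx : x ∈ K) (hsx : s • x' - x ∈ K) :
    dotp y x = f x := by
  have hyx' := dotp_eq_of_mem_subgradients_of_eqOn hfL hx' hy
  have hw := dotp_le_of_mem_subgradients hy hyx' (s • x' - x)
  rw [hfL hsx, map_sub, map_smul, ← hfL hx', ← hfL hx, dotp_sub, dotp_smul, hyx',
    smul_eq_mul] at hw
  exact le_antisymm (dotp_le_of_mem_subgradients hy hyx' x) (by linarith)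

lemma subgradients_subset_of_smul_sub_mem (hfL : Set.EqOn f L K) (hx' : x' ∈ K) {s : ℝ}
    (hx : x ∈ K) (hsx : s • x' - x ∈ K) : subgradients f x' ⊆ subgradients f x := by
  intro y hy z
  have hyx' := dotp_eq_of_mem_subgradients_of_eqOn hfL hx' hy
  rw [dotp_sub, dotp_eq_of_mem_subgradients_of_smul_sub_mem hfL hx' hy hx hsx]
  linarith [dotp_le_of_mem_subgradients hy hyx' z]

end LinearOnCone

open Set in
lemma integral_eq_sum_of_eqOn_uIoo {g : ℝ → ℝ} {a c : ℕ → ℝ} {n : ℕ}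
    (h : ∀ k < n, EqOn g (fun _ => c k) (uIoo (a k) (a (k + 1)))) :
    ∫ t in a 0..a n, g t = ∑ k ∈ range n, c k * (a (k + 1) - a k) := by
  rw [← intervalIntegral.sum_integral_adjacent_intervals fun k hk =>
    intervalIntegrable_const.congr_uIoo (h k hk).symm]
  refine sum_congr rfl fun k hk => ?_
  rw [intervalIntegral.integral_congr_uIoo (h k (mem_range.1 hk)),
    intervalIntegral.integral_const, smul_eq_mul, mul_comm]

def monotoneCone {N : ℕ} (σ : Equiv.Perm (Fin N)) : PointedCone ℝ (Fin N → ℝ) where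
  carrier := {z | Monotone (z ∘ σ)}
  add_mem' hz hw := hz.add hw
  zero_mem' := monotone_const
  smul_mem' c _ hz := hz.const_mul c.2

lemma mem_monotoneCone {N : ℕ} {σ : Equiv.Perm (Fin N)} {z : Fin N → ℝ} :
    z ∈ monotoneCone σ ↔ Monotone (z ∘ σ) := Iff.rfl

section SortedSum

variable {n : ℕ} {x : Fin (n + 1) → ℝ} {σ : Equiv.Perm (Fin (n + 1))}

lemma clamp_le_clamp_succ (k : ℕ) : Fin.clamp k n ≤ Fin.clamp (k + 1) n := by
  simp only [Fin.le_def, Fin.clamp]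
  omega

lemma iInf_eq_of_monotone_comp (hm : Monotone (x ∘ σ)) : ⨅ v, x v = x (σ (Fin.clamp 0 n)) :=
  le_antisymm (ciInf_le (Finite.bddBelow_range x) _) <| le_ciInf fun v => by
    simpa using hm (show Fin.clamp 0 n ≤ σ.symm v by simp [Fin.clamp])

lemma iSup_eq_of_monotone_comp (hm : Monotone (x ∘ σ)) : ⨆ v, x v = x (σ (Fin.clamp n n)) :=
  le_antisymm (ciSup_le fun v => by
    simpa using hm (show σ.symm v ≤ Fin.clamp n n by
      simp only [Fin.le_def, Fin.clamp]; omega)) (le_ciSup (Finite.bddAbove_range x) _)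

lemma filter_lt_eq_of_mem_Ioo (hm : Monotone (x ∘ σ)) {k : ℕ} {t : ℝ}
    (ht : t ∈ Set.Ioo (x (σ (Fin.clamp k n))) (x (σ (Fin.clamp (k + 1) n)))) :
    univ.filter (fun v => t < x v) = univ.filter (fun v => k < (σ.symm v : ℕ)) := by
  ext v
  simp only [mem_filter, mem_univ, true_and]
  constructor
  · intro hlt
    by_contra hk
    have hle := hm (show σ.symm v ≤ Fin.clamp k n by
      simp only [Fin.le_def, Fin.clamp]; omega)
    simp only [Function.comp_apply, Equiv.apply_symm_apply] at hle
    linarith [ht.1]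
  · intro hk
    have hle := hm (show Fin.clamp (k + 1) n ≤ σ.symm v by
      simp only [Fin.le_def, Fin.clamp]; omega)
    simp only [Function.comp_apply, Equiv.apply_symm_apply] at hle
    linarith [ht.2]

lemma lovasz_eq_sum (F : Finset (Fin (n + 1)) → ℝ) (hm : Monotone (x ∘ σ)) :
    lovasz F x = ∑ k ∈ range n, F (univ.filter fun v => k < (σ.symm v : ℕ)) *
      (x (σ (Fin.clamp (k + 1) n)) - x (σ (Fin.clamp k n))) := by
  rw [lovasz, iInf_eq_of_monotone_comp hm, iSup_eq_of_monotone_comp hm]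
  refine integral_eq_sum_of_eqOn_uIoo (a := fun k => x (σ (Fin.clamp k n))) fun k _ t ht => ?_
  rw [Set.uIoo_of_le (show x (σ _) ≤ x (σ _) from hm (clamp_le_clamp_succ k))] at ht
  exact congrArg F (filter_lt_eq_of_mem_Ioo hm ht)

end SortedSum

def lovaszLinear {n : ℕ} (F : Finset (Fin (n + 1)) → ℝ) (σ : Equiv.Perm (Fin (n + 1))) :
    (Fin (n + 1) → ℝ) →ₗ[ℝ] ℝ :=
  ∑ k ∈ range n, F (univ.filter fun v => k < (σ.symm v : ℕ)) •
    (LinearMap.proj (R := ℝ) (φ := fun _ => ℝ) (σ (Fin.clamp (k + 1) n)) -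
      LinearMap.proj (σ (Fin.clamp k n)))

lemma lovasz_eqOn_lovaszLinear {n : ℕ} (F : Finset (Fin (n + 1)) → ℝ)
    (σ : Equiv.Perm (Fin (n + 1))) : Set.EqOn (lovasz F) (lovaszLinear F σ) (monotoneCone σ) :=
  fun x hx => by
    simp [lovasz_eq_sum F (mem_monotoneCone.1 hx), lovaszLinear]

lemma exists_linearMap_eqOn_lovasz : ∀ {N : ℕ} (F : Finset (Fin N) → ℝ) (σ : Equiv.Perm (Fin N)),
    ∃ L : (Fin N → ℝ) →ₗ[ℝ] ℝ, Set.EqOn (lovasz F) L (monotoneCone σ)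
  | 0, F, _ => ⟨0, fun x _ => by simp [lovasz, Real.iInf_of_isEmpty, Real.iSup_of_isEmpty]⟩
  | _ + 1, F, σ => ⟨lovaszLinear F σ, lovasz_eqOn_lovaszLinear F σ⟩

theorem stmt2_general {N : ℕ} (F : Finset (Fin N) → ℝ) (x x' : Fin N → ℝ)
    (hdom : ∀ u v : Fin N, x v < x u → x' v < x' u) :
    subgradients (lovasz F) x' ⊆ subgradients (lovasz F) x ∧
    ∀ y ∈ subgradients (lovasz F) x', dotp y x = lovasz F x := by
  set σ := Tuple.sort x'
  obtain ⟨L, hL⟩ := exists_linearMap_eqOn_lovasz F σ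
  have hx' : x' ∈ monotoneCone σ := Tuple.monotone_sort x'
  have hx : x ∈ monotoneCone σ := fun i j hij => le_of_dominates hdom (hx' hij)
  obtain ⟨s, hs⟩ := exists_smul_sub_le_of_dominates hdom
  have hsx : s • x' - x ∈ monotoneCone σ := fun i j hij => hs _ _ (hx' hij)
  exact ⟨subgradients_subset_of_smul_sub_mem hL hx' hx hsx,
    fun y hy => dotp_eq_of_mem_subgradients_of_smul_sub_mem hL hx' hy hx hsx⟩

/-- If `x ⇀ x′` (i.e. `x_u > x_v` implies `x′_u > x′_v`), then
`∇f(x′) ⊆ ∇f(x)` and `⟨y, x⟩ = f(x)` for every `y ∈ ∇f(x′)`. -/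
theorem stmt2 {N : ℕ} (F : Finset (Fin N) → ℝ) (hsub : Submodular F)
    (hV : F Finset.univ = 0) (x x' : Fin N → ℝ)
    (hdom : ∀ u v : Fin N, x v < x u → x' v < x' u) :
    subgradients (lovasz F) x' ⊆ subgradients (lovasz F) x ∧
    ∀ y ∈ subgradients (lovasz F) x', dotp y x = lovasz F x :=
  stmt2_general F x x' hdom
end
end

section
/- Let F : 2^V → ℝ be a symmetric, normalized submodular function on a finite set V (so F(∅) = F(V) = 0 and F(S) = F(V∖S) for all S). If S₁ ⊆ V satisfies F(S₁) = 0, then for every S ⊆ V one has F(S) = F(S ∩ S₁) + F(S ∖ S₁); moreover, F(S₁ ∖ S) = F(S ∩ S₁) and F(S ∖ S₁) = F(S ∪ S₁). -/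
open scoped BigOperators
open Finset

noncomputable section

/-- If `F` is symmetric, normalized and submodular and `F(S₁) = 0`,
then `F(S) = F(S ∩ S₁) + F(S ∖ S₁)`, `F(S₁ ∖ S) = F(S ∩ S₁)` and
`F(S ∖ S₁) = F(S ∪ S₁)` for all `S`. -/
theorem stmt3 {N : ℕ} (F : Finset (Fin N) → ℝ) (hsub : Submodular F)
    (hsymm : ∀ S : Finset (Fin N), F S = F Sᶜ)
    (hempty : F ∅ = 0)
    (S₁ : Finset (Fin N)) (hS₁ : F S₁ = 0) :
    (∀ S : Finset (Fin N), F S = F (S ∩ S₁) + F (S \ S₁)) ∧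
    (∀ S : Finset (Fin N), F (S₁ \ S) = F (S ∩ S₁)) ∧
    (∀ S : Finset (Fin N), F (S \ S₁) = F (S ∪ S₁)) := by
  have huniv : F (Finset.univ : Finset (Fin N)) = 0 := by
    have := hsymm (∅ : Finset (Fin N))
    simpa [hempty] using this.symm
  have hS₁c : F S₁ᶜ = 0 := by rw [← hsymm]; exact hS₁
  -- third claim
  have h3 : ∀ S : Finset (Fin N), F (S \ S₁) = F (S ∪ S₁) := by
    intro S
    have e1 : (S ∪ S₁) ∪ S₁ᶜ = (Finset.univ : Finset (Fin N)) := by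
      ext v; simp [Finset.mem_union, Finset.mem_compl]; try tauto
    have e2 : (S ∪ S₁) ∩ S₁ᶜ = S \ S₁ := by
      ext v; simp [Finset.mem_union, Finset.mem_compl, Finset.mem_sdiff]; try tauto
    have a := hsub (S ∪ S₁) S₁ᶜ
    rw [e1, e2, huniv, hS₁c] at a
    have e3 : (S \ S₁) ∪ S₁ = S ∪ S₁ := by
      ext v; simp [Finset.mem_union, Finset.mem_sdiff]; try tauto
    have e4 : (S \ S₁) ∩ S₁ = (∅ : Finset (Fin N)) := by
      ext v; simp [Finset.mem_sdiff]
    have b := hsub (S \ S₁) S₁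
    rw [e3, e4, hempty, hS₁] at b
    linarith
  -- first claim
  have h1 : ∀ S : Finset (Fin N), F S = F (S ∩ S₁) + F (S \ S₁) := by
    intro S
    have e1 : (S ∩ S₁) ∪ (S \ S₁) = S := by
      ext v; simp [Finset.mem_union, Finset.mem_inter, Finset.mem_sdiff]; try tauto
    have e2 : (S ∩ S₁) ∩ (S \ S₁) = (∅ : Finset (Fin N)) := by
      ext v; simp [Finset.mem_inter, Finset.mem_sdiff]; try tauto
    have a := hsub (S ∩ S₁) (S \ S₁)
    rw [e1, e2, hempty] at a
    have b := hsub S₁ S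
    have e3 : S₁ ∪ S = S ∪ S₁ := Finset.union_comm _ _
    have e4 : S₁ ∩ S = S ∩ S₁ := Finset.inter_comm _ _
    rw [e3, e4, hS₁, ← h3 S] at b
    linarith
  refine ⟨h1, ?_, h3⟩
  -- second claim, via a one-sided lemma
  have hle : ∀ S : Finset (Fin N), F (S₁ \ S) ≤ F (S ∩ S₁) := by
    intro S
    have a := hsub S₁ Sᶜ
    have e1 : S₁ ∪ Sᶜ = (S \ S₁)ᶜ := by
      ext v; simp [Finset.mem_union, Finset.mem_compl, Finset.mem_sdiff]; try tauto
    have e2 : S₁ ∩ Sᶜ = S₁ \ S := by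
      ext v; simp [Finset.mem_inter, Finset.mem_compl, Finset.mem_sdiff]
    rw [e1, e2, ← hsymm (S \ S₁), hS₁, ← hsymm S] at a
    have := h1 S
    linarith
  intro S
  have a := hle S
  have b := hle Sᶜ
  have e1 : S₁ \ Sᶜ = S ∩ S₁ := by
    ext v; simp [Finset.mem_sdiff, Finset.mem_compl, Finset.mem_inter]; try tauto
  have e2 : Sᶜ ∩ S₁ = S₁ \ S := by
    ext v; simp [Finset.mem_inter, Finset.mem_compl, Finset.mem_sdiff]; try tauto
  rw [e1, e2] at b
  linarith
end
end

section
/- Every submodular hypergraph G = (V, E, w, μ) can be reduced to a submodular hypergraph G′ = (V, E′, w′, μ) on the same vertex set with the same vertex weights such that vol_{G′}(∂S) = vol_G(∂S) for every S ⊆ V, and such that for every hyperedge e ∈ E′ and all u, v ∈ e, the vertices u and v are connected in G′. (Equivalently, in G′ every hyperedge weight satisfies w′_e(S) > 0 for all S with ∅ ≠ S ∩ e ⊊ e.) -/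
open scoped BigOperators
open Finset

noncomputable section

/-!
Call `S` *null* if `vol(∂S) = 0`. Since `S ↦ vol(∂S)` is nonnegative, submodular and symmetric,
null sets are closed under intersection and complement, and a null set `T` splits the cut
function: `vol(∂S) = vol(∂(S ∩ T)) + vol(∂(S ∖ T))`. Connectedness of vertices is the
equivalence relation "no null set separates them"; each class is the intersection of the null
sets containing one of its points, hence null. Splitting along all classes gives
`vol(∂S) = Σ_C vol(∂(S ∩ C))`, and each summand, rescaled by its maximum, is a normalized
symmetric submodular weight on the hyperedge `C`.
-/

section SetFunction

variable {N : ℕ} {F : Finset (Fin N) → ℝ}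

lemma Submodular.comp_inter (hF : Submodular F) (C : Finset (Fin N)) :
    Submodular fun S => F (S ∩ C) := fun A B => by
  have := hF (A ∩ C) (B ∩ C)
  rwa [← union_inter_distrib_right, ← inter_inter_distrib_right] at this

lemma Submodular.div_const (hF : Submodular F) {c : ℝ} (hc : 0 < c) :
    Submodular fun S => F S / c := fun A B => by
  rw [← add_div, ← add_div]
  exact div_le_div_of_nonneg_right (hF A B) hc.le

lemma Submodular.inter_eq_zero (hF : Submodular F) (hnonneg : ∀ S, 0 ≤ F S) {A B : Finset (Fin N)}
    (hA : F A = 0) (hB : F B = 0) : F (A ∩ B) = 0 := by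
  have := hF A B
  linarith [hnonneg (A ∪ B), hnonneg (A ∩ B)]

lemma Submodular.eq_inter_add_sdiff (hF : Submodular F) (hempty : F ∅ = 0)
    (hcompl : ∀ S, F Sᶜ = F S) {T : Finset (Fin N)} (hT : F T = 0) (S : Finset (Fin N)) :
    F S = F (S ∩ T) + F (S \ T) := by
  have hle : F S ≤ F (S ∩ T) + F (S \ T) := by
    have := hF (S ∩ T) (S \ T)
    rwa [union_comm, sdiff_union_inter,
      disjoint_iff_inter_eq_empty.1 (disjoint_sdiff_inter S T).symm, hempty, add_zero] at this
  have hS : F (S ∪ T) + F (S ∩ T) ≤ F S := by simpa [hT] using hF S T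
  have hST : F (S \ T) ≤ F (S ∪ T) := by
    have := hF (S ∪ T) Tᶜ
    rwa [union_assoc, union_compl, union_eq_right.2 (subset_univ _), ← compl_empty, hcompl,
      hempty, hcompl, hT, union_inter_distrib_right, inter_compl, union_empty,
      ← sdiff_eq_inter_compl, zero_add, add_zero] at this
  linarith

lemma Submodular.eq_sdiff_of_subset (hF : Submodular F) (hempty : F ∅ = 0)
    (hcompl : ∀ S, F Sᶜ = F S) {S T : Finset (Fin N)} (hT : F T = 0) (hST : S ⊆ T) :
    F S = F (T \ S) := by
  have hsplit := hF.eq_inter_add_sdiff hempty hcompl hT Sᶜ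
  rwa [hcompl, inter_comm, ← sdiff_eq_inter_compl, sdiff_eq_inter_compl Sᶜ,
    inter_eq_right.2 (compl_subset_compl.2 hST), hcompl, hT, add_zero] at hsplit

lemma Submodular.eq_sum_inter_add_sdiff_sup (hF : Submodular F) (hempty : F ∅ = 0)
    (hcompl : ∀ S, F Sᶜ = F S) {𝒞 : Finset (Finset (Fin N))}
    (hdisj : (𝒞 : Set (Finset (Fin N))).PairwiseDisjoint id) (hnull : ∀ C ∈ 𝒞, F C = 0)
    (S : Finset (Fin N)) : F S = ∑ C ∈ 𝒞, F (S ∩ C) + F (S \ 𝒞.sup id) := by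
  induction 𝒞 using Finset.induction_on generalizing S with
  | empty => simp
  | @insert C 𝒞 hC ih =>
    have hdisj' : (𝒞 : Set (Finset (Fin N))).PairwiseDisjoint id :=
      hdisj.subset (coe_subset.2 (subset_insert C 𝒞))
    have hsdiff_inter : ∀ C' ∈ 𝒞, (S \ C) ∩ C' = S ∩ C' := fun C' hC' => by
      have hCC' : Disjoint C C' := hdisj (mem_coe.2 (mem_insert_self C 𝒞))
        (mem_coe.2 (mem_insert_of_mem hC')) fun h => hC (h ▸ hC')
      rw [sdiff_inter_right_comm,
        sdiff_eq_self_of_disjoint (hCC'.symm.mono_left inter_subset_right)]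
    rw [hF.eq_inter_add_sdiff hempty hcompl (hnull C (mem_insert_self C 𝒞)) S,
      ih hdisj' (fun C' hC' => hnull C' (mem_insert_of_mem hC')) (S \ C), sum_insert hC,
      sum_congr rfl fun C' hC' => congrArg F (hsdiff_inter C' hC'), sup_insert, id_eq,
      sdiff_sdiff_left, add_assoc]

lemma Submodular.eq_sum_parts (hF : Submodular F) (hempty : F ∅ = 0) (hcompl : ∀ S, F Sᶜ = F S)
    (P : Finpartition (univ : Finset (Fin N))) (hnull : ∀ C ∈ P.parts, F C = 0)
    (S : Finset (Fin N)) : F S = ∑ C ∈ P.parts, F (S ∩ C) := by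
  rw [hF.eq_sum_inter_add_sdiff_sup hempty hcompl P.disjoint hnull S, P.sup_parts,
    sdiff_eq_empty_iff_subset.2 (subset_univ S), hempty, add_zero]

end SetFunction

namespace SubmodularHypergraph

variable {N : ℕ} (G : SubmodularHypergraph N)

lemma volB_nonneg (S : Finset (Fin N)) : 0 ≤ G.volB S :=
  sum_nonneg fun e he => mul_nonneg (G.θ_pos e he).le (G.w_nonneg e he S)

lemma volB_empty : G.volB ∅ = 0 :=
  sum_eq_zero fun e he => by rw [G.w_empty e he, mul_zero]

lemma w_compl {e : Finset (Fin N)} (he : e ∈ G.E) (S : Finset (Fin N)) :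
    G.w e Sᶜ = G.w e S := by
  rw [G.w_inter e he, G.w_inter e he S, G.w_symm e he (S ∩ e) inter_subset_right,
    inter_comm S e, sdiff_inter_self_left, sdiff_eq_inter_compl, inter_comm]

lemma volB_compl (S : Finset (Fin N)) : G.volB Sᶜ = G.volB S :=
  sum_congr rfl fun e he => by rw [G.w_compl he]

lemma volB_submodular : Submodular G.volB := fun A B => by
  simp only [volB, ← sum_add_distrib, ← mul_add]
  exact sum_le_sum fun e he =>
    mul_le_mul_of_nonneg_left (G.w_submodular e he A B) (G.θ_pos e he).le

lemma volB_univ : G.volB univ = 0 := by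
  rw [← compl_empty, volB_compl, volB_empty]

lemma vertConnected_iff {u v : Fin N} :
    G.VertConnected u v ↔ ∀ S, u ∈ S → G.volB S = 0 → v ∈ S := by
  refine ⟨fun h S hu hS => by_contra fun hv => (h S hu hv).ne' hS, fun h S hu hv => ?_⟩
  exact (G.volB_nonneg S).lt_of_ne fun hS => hv (h S hu hS.symm)

lemma vertConnected_symm {u v : Fin N} (h : G.VertConnected u v) : G.VertConnected v u :=
  fun S hv hu => G.volB_compl S ▸ h Sᶜ (mem_compl.2 hu) fun hv' => mem_compl.1 hv' hv

lemma vertConnected_trans {u v w : Fin N} (huv : G.VertConnected u v)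
    (hvw : G.VertConnected v w) : G.VertConnected u w := fun S hu hw => by
  by_cases hv : v ∈ S
  · exact hvw S hv hw
  · exact huv S hu hv

def vertConnectedSetoid : Setoid (Fin N) where
  r := G.VertConnected
  iseqv := ⟨fun _ _ hu hu' => absurd hu hu', G.vertConnected_symm, G.vertConnected_trans⟩

open Classical in
def connectedComponents : Finpartition (univ : Finset (Fin N)) :=
  Finpartition.ofSetoid G.vertConnectedSetoid

open Classical in
lemma mem_connectedComponents_part_iff {u v : Fin N} :
    v ∈ G.connectedComponents.part u ↔ G.VertConnected u v :=
  Finpartition.mem_part_ofSetoid_iff_rel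

lemma vertConnected_of_mem_connectedComponents {C : Finset (Fin N)}
    (hC : C ∈ G.connectedComponents.parts) {u v : Fin N} (hu : u ∈ C) (hv : v ∈ C) :
    G.VertConnected u v := by
  rw [← G.mem_connectedComponents_part_iff, G.connectedComponents.part_eq_of_mem hC hu]
  exact hv

lemma volB_connectedComponents_part (u : Fin N) : G.volB (G.connectedComponents.part u) = 0 := by
  have hpart :
      G.connectedComponents.part u = ({S | u ∈ S ∧ G.volB S = 0} : Finset _).inf id := by
    ext v
    rw [mem_connectedComponents_part_iff, vertConnected_iff, mem_inf]
    simp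
  rw [hpart]
  exact inf_induction (p := fun S => G.volB S = 0) G.volB_univ
    (fun A hA B hB => G.volB_submodular.inter_eq_zero G.volB_nonneg hA hB)
    fun S hS => (mem_filter.1 hS).2.2

lemma volB_eq_zero_of_mem_connectedComponents {C : Finset (Fin N)}
    (hC : C ∈ G.connectedComponents.parts) : G.volB C = 0 := by
  obtain ⟨u, hu⟩ := G.connectedComponents.nonempty_of_mem_parts hC
  rw [← G.connectedComponents.part_eq_of_mem hC hu]
  exact G.volB_connectedComponents_part u

def maxVolBInter (C : Finset (Fin N)) : ℝ :=
  univ.sup' univ_nonempty fun S => G.volB (S ∩ C)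

lemma volB_inter_le_maxVolBInter (C S : Finset (Fin N)) : G.volB (S ∩ C) ≤ G.maxVolBInter C :=
  le_sup' (fun S => G.volB (S ∩ C)) (mem_univ S)

def ofPartition (P : Finpartition (univ : Finset (Fin N))) (hP : ∀ C ∈ P.parts, G.volB C = 0) :
    SubmodularHypergraph N where
  E := P.parts.filter fun C => 0 < G.maxVolBInter C
  μ := G.μ
  μ_pos := G.μ_pos
  θ := G.maxVolBInter
  θ_pos _ hC := (mem_filter.1 hC).2
  w C S := G.volB (S ∩ C) / G.maxVolBInter C
  w_inter _ _ S := by rw [inter_assoc, inter_self]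
  w_submodular C hC := (G.volB_submodular.comp_inter C).div_const (mem_filter.1 hC).2
  w_nonneg _ hC _ := div_nonneg (G.volB_nonneg _) (mem_filter.1 hC).2.le
  w_le_one C hC S := (div_le_one (mem_filter.1 hC).2).2 (G.volB_inter_le_maxVolBInter C S)
  w_empty _ _ := by rw [empty_inter, volB_empty, zero_div]
  w_normalized C hC := by
    obtain ⟨S, -, hS⟩ := exists_mem_eq_sup' univ_nonempty fun S => G.volB (S ∩ C)
    refine ⟨S ∩ C, inter_subset_right, ?_⟩
    rw [inter_assoc, inter_self, maxVolBInter, hS, div_self]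
    exact hS ▸ (mem_filter.1 hC).2.ne'
  w_symm C hC S hS := by
    rw [inter_eq_left.2 hS, inter_eq_left.2 sdiff_subset,
      G.volB_submodular.eq_sdiff_of_subset G.volB_empty G.volB_compl (hP C (mem_filter.1 hC).1) hS]

lemma volB_ofPartition (P : Finpartition (univ : Finset (Fin N)))
    (hP : ∀ C ∈ P.parts, G.volB C = 0) (S : Finset (Fin N)) :
    (G.ofPartition P hP).volB S = G.volB S := by
  let E' := P.parts.filter fun C => 0 < G.maxVolBInter C
  calc (G.ofPartition P hP).volB S
      = ∑ C ∈ E', G.maxVolBInter C * (G.volB (S ∩ C) / G.maxVolBInter C) := rfl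
    _ = ∑ C ∈ E', G.volB (S ∩ C) :=
      sum_congr rfl fun C hC => mul_div_cancel₀ _ (mem_filter.1 hC).2.ne'
    _ = ∑ C ∈ P.parts, G.volB (S ∩ C) := sum_subset (filter_subset _ _) fun C hC hCE' =>
      le_antisymm ((G.volB_inter_le_maxVolBInter C S).trans (not_lt.1 fun h =>
        hCE' (mem_filter.2 ⟨hC, h⟩))) (G.volB_nonneg _)
    _ = G.volB S := (G.volB_submodular.eq_sum_parts G.volB_empty G.volB_compl P hP S).symm

end SubmodularHypergraph

/-- Every submodular hypergraph can be reduced to one on the same vertex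
set with the same vertex weights, with identical boundary volumes `vol(∂S)` for every
`S ⊆ V`, and in which any two distinct vertices of a common hyperedge are connected. -/
theorem stmt4 {N : ℕ} (G : SubmodularHypergraph N) :
    ∃ G' : SubmodularHypergraph N,
      G'.μ = G.μ ∧
      (∀ S : Finset (Fin N), G'.volB S = G.volB S) ∧
      (∀ e ∈ G'.E, ∀ u ∈ e, ∀ v ∈ e, u ≠ v → G'.VertConnected u v) := by
  refine ⟨G.ofPartition G.connectedComponents fun _ => G.volB_eq_zero_of_mem_connectedComponents,
    rfl, G.volB_ofPartition _ _, fun C hC u hu v hv _ S huS hvS => ?_⟩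
  rw [G.volB_ofPartition]
  exact G.vertConnected_of_mem_connectedComponents (mem_filter.1 hC).1 hu hv S huS hvS
end
end

section
/- Let G = (V, E, w, μ) be a connected submodular hypergraph and p ≥ 1. Then every eigenvector of the p-Laplacian △_p associated with the eigenvalue 0 has constant entries. In particular, if x ∈ ℝ^N satisfies Q_p(x) = 0, then x is a constant vector. -/
open scoped BigOperators
open Finset

noncomputable section

/-!
Writing the Lovász extension as `f(x) = ∫_{min x}^{max x} F({x > t}) dt`, the superlevel sets
of `x` are the initial segments of one linear order of `V`, and Edmonds' greedy vector `z` for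
that order lies in the base polytope with `z({x > t}) = F({x > t})`, hence `⟨z, x⟩ = f(x)`.
So a maximiser `y_e` of `⟨·, x⟩` over `B_e` satisfies `⟨y_e, x⟩ ≥ f_e(x) ≥ 0`, and testing the
eigen-equation for `λ = 0` against `x` gives `Σ_e θ_e f_e(x)^q ≤ 0` (`q = p`, or `q = 1` in the
case `p = 1`), so every `f_e(x)` vanishes; the same follows at once from `Q_p(x) = 0`. Finally
`Σ_e θ_e f_e(x) = ∫_{min x}^{max x} vol(∂{x > t}) dt`, whose integrand is positive on
`(min x, max x)` by connectivity, so `min x = max x`.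
-/

open MeasureTheory

lemma integral_ite_lt {a b c : ℝ} (hac : a ≤ c) (hcb : c ≤ b) (k : ℝ) :
    ∫ t in a..b, (if t < c then k else 0) = (c - a) * k := by
  have hset : Set.Iio c ∩ Set.Ioc a b = Set.Ioo a c := by
    ext t
    simp only [Set.mem_inter_iff, Set.mem_Iio, Set.mem_Ioc, Set.mem_Ioo]
    constructor
    · rintro ⟨h1, h2, -⟩
      exact ⟨h2, h1⟩
    · rintro ⟨h1, h2⟩
      exact ⟨h2, h1, by linarith⟩
  change ∫ t in a..b, (Set.Iio c).indicator (fun _ => k) t = _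
  rw [intervalIntegral.integral_of_le (hac.trans hcb), integral_indicator measurableSet_Iio,
    Measure.restrict_restrict measurableSet_Iio, hset, setIntegral_const,
    Real.volume_real_Ioo_of_le hac, smul_eq_mul]

lemma intervalIntegrable_ite_lt (a b c k : ℝ) :
    IntervalIntegrable (fun t => if t < c then k else 0) volume a b := by
  change IntervalIntegrable ((Set.Iio c).indicator fun _ => k) volume a b
  exact ⟨intervalIntegrable_const.1.indicator measurableSet_Iio,
    intervalIntegrable_const.2.indicator measurableSet_Iio⟩

section Lovasz

variable {N : ℕ}

def greedyKey (x : Fin N → ℝ) (v : Fin N) : ℝ ×ₗ Fin N := toLex (x v, v)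

lemma greedyKey_injective (x : Fin N → ℝ) : Function.Injective (greedyKey x) :=
  fun _ _ h => congrArg Prod.snd (toLex.injective h)

lemma le_of_greedyKey_le {x : Fin N → ℝ} {u v : Fin N} (h : greedyKey x u ≤ greedyKey x v) :
    x u ≤ x v := by
  rcases Prod.Lex.le_iff.1 h with h | h
  · exact h.le
  · exact h.1.le

/-- Edmonds' greedy vertex of the base polytope for the order of `V` by decreasing `x`, ties
broken by index: `v` receives the marginal value of adding it to the vertices above it. -/
def greedyVec (F : Finset (Fin N) → ℝ) (x : Fin N → ℝ) (v : Fin N) : ℝ :=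
  F (univ.filter fun u => greedyKey x v ≤ greedyKey x u) -
    F (univ.filter fun u => greedyKey x v < greedyKey x u)

lemma sum_greedyVec_of_isUpper (F : Finset (Fin N) → ℝ) (x : Fin N → ℝ) (T : Finset (Fin N))
    (hT : ∀ u ∈ T, ∀ v, greedyKey x u ≤ greedyKey x v → v ∈ T) :
    ∑ v ∈ T, greedyVec F x v = F T - F ∅ := by
  induction T using Finset.induction_on_min_value (greedyKey x) with
  | empty => simp
  | insert a s has hmin ih =>
    have hIci : insert a s = univ.filter fun u => greedyKey x a ≤ greedyKey x u := by
      ext u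
      simp only [mem_insert, mem_filter, mem_univ, true_and]
      refine ⟨?_, fun h => mem_insert.1 (hT a (mem_insert_self a s) u h)⟩
      rintro (rfl | hu)
      exacts [le_rfl, hmin u hu]
    have hIoi : s = univ.filter fun u => greedyKey x a < greedyKey x u := by
      ext u
      simp only [mem_filter, mem_univ, true_and]
      constructor
      · intro hu
        exact (hmin u hu).lt_of_ne fun h => has (greedyKey_injective x h ▸ hu)
      · intro h
        exact (mem_insert.1 (hT a (mem_insert_self a s) u h.le)).resolve_left (by
          rintro rfl; exact h.false)
    have hs : ∀ u ∈ s, ∀ v, greedyKey x u ≤ greedyKey x v → v ∈ s := by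
      intro u hu v huv
      rw [hIoi] at hu ⊢
      simp only [mem_filter, mem_univ, true_and] at hu ⊢
      exact hu.trans_le huv
    rw [sum_insert has, ih hs, greedyVec, ← hIci, ← hIoi]
    ring

lemma sum_greedyVec_le {F : Finset (Fin N) → ℝ} (hF : Submodular F) (x : Fin N → ℝ)
    (S : Finset (Fin N)) : ∑ v ∈ S, greedyVec F x v ≤ F S - F ∅ := by
  induction S using Finset.induction_on_min_value (greedyKey x) with
  | empty => simp
  | insert a s has hmin ih =>
    set Ioi := univ.filter fun u => greedyKey x a < greedyKey x u
    have hsub : s ⊆ Ioi := fun u hu => by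
      simp only [Ioi, mem_filter, mem_univ, true_and]
      exact (hmin u hu).lt_of_ne fun h => has (greedyKey_injective x h ▸ hu)
    have hunion : insert a s ∪ Ioi = univ.filter fun u => greedyKey x a ≤ greedyKey x u := by
      ext u
      simp only [Ioi, mem_union, mem_insert, mem_filter, mem_univ, true_and]
      constructor
      · rintro ((rfl | hu) | h)
        exacts [le_rfl, hmin u hu, h.le]
      · intro h
        rcases h.eq_or_lt with h | h
        exacts [Or.inl (Or.inl (greedyKey_injective x h).symm), Or.inr h]
    have hinter : insert a s ∩ Ioi = s := by
      rw [insert_inter_of_notMem (by simp [Ioi]), inter_eq_left.2 hsub]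
    have := hF (insert a s) Ioi
    rw [hunion, hinter] at this
    rw [sum_insert has, greedyVec]
    linarith

lemma sum_greedyVec (F : Finset (Fin N) → ℝ) (x : Fin N → ℝ) :
    ∑ v, greedyVec F x v = F univ - F ∅ :=
  sum_greedyVec_of_isUpper F x univ fun _ _ v _ => mem_univ v

lemma greedyVec_mem_basePolytope {F : Finset (Fin N) → ℝ} (hF : Submodular F) (h0 : F ∅ = 0)
    (huniv : F univ = 0) (x : Fin N → ℝ) : greedyVec F x ∈ basePolytope F := by
  refine ⟨fun S => by simpa [h0] using sum_greedyVec_le hF x S, ?_⟩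
  rw [sum_greedyVec, huniv, h0, sub_zero]

lemma apply_superlevelSet_eq (F : Finset (Fin N) → ℝ) (x : Fin N → ℝ) (t : ℝ) :
    F (univ.filter fun v => t < x v) = F ∅ + ∑ v, if t < x v then greedyVec F x v else 0 := by
  rw [← sum_filter, sum_greedyVec_of_isUpper]
  · ring
  · intro u hu v huv
    simp only [mem_filter, mem_univ, true_and] at hu ⊢
    exact hu.trans_le (le_of_greedyKey_le huv)

lemma intervalIntegrable_superlevelSet (F : Finset (Fin N) → ℝ) (x : Fin N → ℝ)
    (a b : ℝ) :
    IntervalIntegrable (fun t => F (univ.filter fun v => t < x v)) volume a b := by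
  simp_rw [apply_superlevelSet_eq]
  refine intervalIntegrable_const.add ?_
  simpa only [sum_fn] using
    IntervalIntegrable.sum univ fun v _ => intervalIntegrable_ite_lt a b (x v) (greedyVec F x v)

lemma lovasz_eq_dotp_greedyVec {F : Finset (Fin N) → ℝ} (h0 : F ∅ = 0) (huniv : F univ = 0)
    (x : Fin N → ℝ) : lovasz F x = dotp (greedyVec F x) x := by
  have hsum : ∑ v, greedyVec F x v = 0 := by rw [sum_greedyVec, huniv, h0, sub_zero]
  have hmin : ∀ v, (⨅ u, x u) ≤ x v := ciInf_le (Finite.bddBelow_range x)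
  have hmax : ∀ v, x v ≤ (⨆ u, x u) := le_ciSup (Finite.bddAbove_range x)
  simp_rw [lovasz, apply_superlevelSet_eq, h0, zero_add]
  rw [intervalIntegral.integral_finsetSum fun v _ => intervalIntegrable_ite_lt _ _ _ _]
  simp_rw [integral_ite_lt (hmin _) (hmax _), sub_mul, sum_sub_distrib, ← mul_sum, hsum,
    mul_zero, sub_zero, dotp, mul_comm]

lemma lovasz_nonneg {F : Finset (Fin N) → ℝ} (hF : ∀ S, 0 ≤ F S) (x : Fin N → ℝ) :
    0 ≤ lovasz F x := by
  rcases isEmpty_or_nonempty (Fin N) with hN | ⟨⟨v⟩⟩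
  · simp [lovasz]
  · exact intervalIntegral.integral_nonneg
      ((ciInf_le (Finite.bddBelow_range x) v).trans (le_ciSup (Finite.bddAbove_range x) v))
      fun _ _ => hF _

end Lovasz

namespace SubmodularHypergraph

variable {N : ℕ} (G : SubmodularHypergraph N) {e : Finset (Fin N)}

lemma w_univ (he : e ∈ G.E) : G.w e univ = 0 := by
  rw [G.w_inter e he, univ_inter, G.w_symm e he e subset_rfl, Finset.sdiff_self, G.w_empty e he]

lemma fe_nonneg (he : e ∈ G.E) (x : Fin N → ℝ) : 0 ≤ G.fe e x :=
  lovasz_nonneg (G.w_nonneg e he) x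

lemma fe_le_dotp_of_isMax (he : e ∈ G.E) {x y : Fin N → ℝ}
    (hy : ∀ z ∈ basePolytope (G.w e), dotp z x ≤ dotp y x) : G.fe e x ≤ dotp y x := by
  rw [fe, lovasz_eq_dotp_greedyVec (G.w_empty e he) (G.w_univ he)]
  exact hy _ (greedyVec_mem_basePolytope (G.w_submodular e he) (G.w_empty e he) (G.w_univ he) x)

lemma fe_eq_zero_of_Q_nonpos {p : ℝ} {x : Fin N → ℝ} (hQ : G.Q p x ≤ 0) (he : e ∈ G.E) :
    G.fe e x = 0 := by
  have hterm : ∀ e ∈ G.E, 0 ≤ G.θ e * G.fe e x ^ p :=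
    fun e he => mul_nonneg (G.θ_pos e he).le (Real.rpow_nonneg (G.fe_nonneg he x) p)
  have h := (sum_eq_zero_iff_of_nonneg hterm).1 (hQ.antisymm (sum_nonneg hterm)) e he
  rw [mul_eq_zero, or_iff_right (G.θ_pos e he).ne',
    Real.rpow_eq_zero_iff_of_nonneg (G.fe_nonneg he x)] at h
  exact h.1

lemma sum_mul_fe_nonpos {x : Fin N → ℝ} {y : Finset (Fin N) → Fin N → ℝ}
    (hy : ∀ e ∈ G.E, ∀ z ∈ basePolytope (G.w e), dotp z x ≤ dotp (y e) x)
    {c : Finset (Fin N) → ℝ} (hc : ∀ e ∈ G.E, 0 ≤ c e)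
    (hcy : ∀ v, ∑ e ∈ G.E, c e * y e v = 0) :
    ∑ e ∈ G.E, c e * G.fe e x ≤ 0 :=
  calc ∑ e ∈ G.E, c e * G.fe e x
      ≤ ∑ e ∈ G.E, c e * dotp (y e) x :=
        sum_le_sum fun e he =>
          mul_le_mul_of_nonneg_left (G.fe_le_dotp_of_isMax he (hy e he)) (hc e he)
    _ = ∑ v, (∑ e ∈ G.E, c e * y e v) * x v := by
        simp only [dotp, mul_sum, sum_mul, mul_assoc]
        exact sum_comm
    _ = 0 := by simp [hcy]

lemma fe_eq_zero_of_isEigenpair_zero {p : ℝ} {x : Fin N → ℝ} (h : G.IsEigenpair p 0 x)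
    (he : e ∈ G.E) : G.fe e x = 0 := by
  obtain ⟨-, y, hy, heq⟩ := h
  replace hy : ∀ e ∈ G.E, ∀ z ∈ basePolytope (G.w e), dotp z x ≤ dotp (y e) x :=
    fun e he => (hy e he).2
  split_ifs at heq with hp
  · refine G.fe_eq_zero_of_Q_nonpos (p := p) ?_ he
    have := G.sum_mul_fe_nonpos hy (c := fun e => G.θ e * G.fe e x ^ (p - 1))
      (fun e he => mul_nonneg (G.θ_pos e he).le (Real.rpow_nonneg (G.fe_nonneg he x) _))
      (fun v => by simpa using heq v)
    refine le_of_eq_of_le (sum_congr rfl fun e he => ?_) this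
    rw [mul_assoc, ← Real.rpow_add_one' (G.fe_nonneg he x) (by linarith), sub_add_cancel]
  · refine G.fe_eq_zero_of_Q_nonpos (p := 1) ?_ he
    have := G.sum_mul_fe_nonpos hy (c := G.θ) (fun e he => (G.θ_pos e he).le) fun v => by
      by_cases hv : x v = 0
      · simpa using heq.2 v hv
      · simpa using heq.1 v hv
    simpa [Q] using this

lemma intervalIntegrable_volB_superlevelSet (x : Fin N → ℝ) (a b : ℝ) :
    IntervalIntegrable (fun t => G.volB (univ.filter fun v => t < x v)) volume a b := by
  simpa only [volB, sum_fn] using IntervalIntegrable.sum G.E fun e _ =>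
    (intervalIntegrable_superlevelSet (G.w e) x a b).const_mul (G.θ e)

lemma sum_θ_mul_fe_eq_integral_volB (x : Fin N → ℝ) :
    ∑ e ∈ G.E, G.θ e * G.fe e x =
      ∫ t in (⨅ v, x v)..(⨆ v, x v), G.volB (univ.filter fun v => t < x v) := by
  simp only [volB]
  rw [intervalIntegral.integral_finsetSum fun e _ =>
    (intervalIntegrable_superlevelSet (G.w e) x _ _).const_mul (G.θ e)]
  simp only [intervalIntegral.integral_const_mul, fe, lovasz]

lemma Connected.volB_superlevelSet_pos {G : SubmodularHypergraph N} (hG : G.Connected)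
    {x : Fin N → ℝ} {t : ℝ} (ht : t ∈ Set.Ioo (⨅ v, x v) (⨆ v, x v)) :
    0 < G.volB (univ.filter fun v => t < x v) := by
  have : Nonempty (Fin N) := not_isEmpty_iff.1 fun _ => by
    simp [Real.iInf_of_isEmpty, Real.iSup_of_isEmpty] at ht
  obtain ⟨u, hu⟩ := exists_lt_of_lt_ciSup ht.2
  obtain ⟨v, hv⟩ := exists_lt_of_ciInf_lt ht.1
  refine hG _ ⟨u, by simpa using hu⟩ fun h => ?_
  have := h ▸ mem_univ v
  simp only [mem_filter, mem_univ, true_and] at this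
  exact lt_asymm hv this

lemma Connected.exists_const_of_fe_eq_zero {G : SubmodularHypergraph N} (hG : G.Connected)
    {x : Fin N → ℝ} (hx : ∀ e ∈ G.E, G.fe e x = 0) : ∃ c : ℝ, ∀ v, x v = c := by
  have hmin : ∀ v, (⨅ u, x u) ≤ x v := ciInf_le (Finite.bddBelow_range x)
  have hmax : ∀ v, x v ≤ (⨆ u, x u) := le_ciSup (Finite.bddAbove_range x)
  suffices h : ¬ (⨅ u, x u) < (⨆ u, x u) from
    ⟨⨅ u, x u, fun v => ((hmax v).trans (not_lt.1 h)).antisymm (hmin v)⟩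
  intro hlt
  have hpos := intervalIntegral.intervalIntegral_pos_of_pos_on
    (G.intervalIntegrable_volB_superlevelSet x _ _) (fun _ ht => hG.volB_superlevelSet_pos ht) hlt
  rw [← G.sum_θ_mul_fe_eq_integral_volB,
    sum_eq_zero fun e he => by rw [hx e he, mul_zero]] at hpos
  exact hpos.false

end SubmodularHypergraph

theorem stmt5_general {N : ℕ} (G : SubmodularHypergraph N) (p : ℝ)
    (hG : G.Connected) :
    (∀ x : Fin N → ℝ, G.IsEigenpair p 0 x → ∃ c : ℝ, ∀ v, x v = c) ∧
    (∀ x : Fin N → ℝ, G.Q p x = 0 → ∃ c : ℝ, ∀ v, x v = c) :=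
  ⟨fun _ hx => hG.exists_const_of_fe_eq_zero fun _ => G.fe_eq_zero_of_isEigenpair_zero hx,
    fun _ hQ => hG.exists_const_of_fe_eq_zero fun _ => G.fe_eq_zero_of_Q_nonpos hQ.le⟩

/-- In a connected submodular hypergraph, every eigenvector of `△_p`
(`p ≥ 1`) associated with the eigenvalue `0` is constant; in particular `Q_p(x) = 0`
forces `x` to be constant. -/
theorem stmt5 {N : ℕ} (G : SubmodularHypergraph N) (p : ℝ) (hp : 1 ≤ p)
    (hG : G.Connected) :
    (∀ x : Fin N → ℝ, G.IsEigenpair p 0 x → ∃ c : ℝ, ∀ v, x v = c) ∧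
    (∀ x : Fin N → ℝ, G.Q p x = 0 → ∃ c : ℝ, ∀ v, x v = c) :=
  stmt5_general G p hG
end
end
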